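/- arXiv:2604.16866 — 5 statements merged into one kernel-verified Lean document; each statement's English description precedes it below -/
import Mathlib

section
/- Let P(x) ∈ ℚ[x] be monic of degree n with a root (in ℂ) that is not a root of unity. For each prime p such that P splits completely over 𝔽_p with no zero root, let λ(P,p) denote the least common multiple of the multiplicative orders (in 𝔽_p^×) of the roots of P mod p. Then for every M there are only finitely many such primes p with λ(P,p) ≤ M. Equivalently: if there are infinitely many splitting primes p with λ(P,p) ≤ M, then every complex root of P is an M!-th root of unity and P divides (x^{M!} − 1)^n in ℚ[x]. -/
open Polynomial

/-- Reduction of a rational number modulo a prime `p` (meaningful when `p` does not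
divide the denominator). -/
noncomputable def ratRed (p : ℕ) (hp : p.Prime) (q : ℚ) : ZMod p :=
  haveI := Fact.mk hp
  (q.num : ZMod p) * ((q.den : ZMod p))⁻¹

/-- Reduction of a rational polynomial modulo a prime `p`. -/
noncomputable def polyRed (p : ℕ) (hp : p.Prime) (P : Polynomial ℚ) : Polynomial (ZMod p) :=
  ∑ i ∈ P.support, Polynomial.C (ratRed p hp (P.coeff i)) * Polynomial.X ^ i

/-- The least common multiple of the denominators of the coefficients of a rational
polynomial. -/
def denLcm (P : Polynomial ℚ) : ℕ := P.support.lcm fun i => (P.coeff i).den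

/-- The subring of rationals with denominator not divisible by `p`. -/
def ratSub (p : ℕ) (hp : p.Prime) : Subring ℚ where
  carrier := {q | ¬ p ∣ q.den}
  one_mem' := by simp [hp.one_lt.ne', Nat.dvd_one]
  zero_mem' := by simp [hp.one_lt.ne', Nat.dvd_one]
  mul_mem' := by
    intro a b ha hb h
    rcases (hp.dvd_mul.mp (h.trans (Rat.mul_den_dvd a b))) with h' | h'
    exacts [ha h', hb h']
  add_mem' := by
    intro a b ha hb h
    rcases (hp.dvd_mul.mp (h.trans (Rat.add_den_dvd a b))) with h' | h'
    exacts [ha h', hb h']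
  neg_mem' := by
    intro a ha h
    rw [Rat.den_neg_eq_den] at h
    exact ha h

lemma mem_ratSub {p : ℕ} {hp : p.Prime} {q : ℚ} : q ∈ ratSub p hp ↔ ¬ p ∣ q.den := Iff.rfl

lemma num_eq (q : ℚ) : (q.num : ℚ) = q * q.den := by
  field_simp [Rat.num_div_den q]
  exact (Rat.mul_den_eq_num q).symm

lemma den_ne_zero_zmod (p : ℕ) (hp : p.Prime) {q : ℚ} (h : ¬ p ∣ q.den) :
    ((q.den : ZMod p)) ≠ 0 := by
  rwa [Ne, ZMod.natCast_eq_zero_iff]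

/-- `ratRed` as a ring hom on `ratSub`. -/
noncomputable def ratHom (p : ℕ) (hp : p.Prime) : ratSub p hp →+* ZMod p where
  toFun q := ratRed p hp q
  map_one' := by
    simp [ratRed]
  map_zero' := by
    simp [ratRed]
  map_mul' := by
    haveI := Fact.mk hp
    rintro ⟨a, ha⟩ ⟨b, hb⟩
    simp only [MulMemClass.mk_mul_mk]
    have hab : ¬ p ∣ (a * b).den := (ratSub p hp).mul_mem ha hb
    have key : a.num * b.num * ((a * b).den : ℤ) = (a * b).num * ((a.den : ℤ) * (b.den : ℤ)) := by
      have : ((a.num * b.num * ((a * b).den : ℤ) : ℤ) : ℚ)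
          = (((a * b).num * ((a.den : ℤ) * (b.den : ℤ)) : ℤ) : ℚ) := by
        push_cast
        rw [num_eq, num_eq, num_eq]
        ring
      exact_mod_cast this
    have key2 : (a.num : ZMod p) * (b.num : ZMod p) * ((a * b).den : ZMod p)
        = ((a * b).num : ZMod p) * ((a.den : ZMod p) * (b.den : ZMod p)) := by
      have := congrArg (fun n : ℤ => (n : ZMod p)) key
      push_cast at this
      exact this
    unfold ratRed
    field_simp [den_ne_zero_zmod p hp ha, den_ne_zero_zmod p hp hb, den_ne_zero_zmod p hp hab]
    linear_combination -key2
  map_add' := by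
    haveI := Fact.mk hp
    rintro ⟨a, ha⟩ ⟨b, hb⟩
    simp only [AddMemClass.mk_add_mk]
    have hab : ¬ p ∣ (a + b).den := (ratSub p hp).add_mem ha hb
    have key : (a.num * b.den + b.num * a.den) * ((a + b).den : ℤ)
        = (a + b).num * ((a.den : ℤ) * (b.den : ℤ)) := by
      have : (((a.num * b.den + b.num * a.den) * ((a + b).den : ℤ) : ℤ) : ℚ)
          = (((a + b).num * ((a.den : ℤ) * (b.den : ℤ)) : ℤ) : ℚ) := by
        push_cast
        rw [num_eq, num_eq, num_eq]
        ring
      exact_mod_cast this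
    have key2 : ((a.num : ZMod p) * (b.den : ZMod p) + (b.num : ZMod p) * (a.den : ZMod p))
          * ((a + b).den : ZMod p)
        = ((a + b).num : ZMod p) * ((a.den : ZMod p) * (b.den : ZMod p)) := by
      have := congrArg (fun n : ℤ => (n : ZMod p)) key
      push_cast at this
      exact this
    unfold ratRed
    field_simp [den_ne_zero_zmod p hp ha, den_ne_zero_zmod p hp hb, den_ne_zero_zmod p hp hab]
    linear_combination -key2

lemma ratRed_zero (p : ℕ) (hp : p.Prime) : ratRed p hp 0 = 0 := by simp [ratRed]

lemma coeff_polyRed (p : ℕ) (hp : p.Prime) (P : Polynomial ℚ) (j : ℕ) :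
    (polyRed p hp P).coeff j = ratRed p hp (P.coeff j) := by
  unfold polyRed
  rw [finset_sum_coeff]
  simp only [coeff_C_mul, coeff_X_pow, mul_ite, mul_one, mul_zero]
  rw [Finset.sum_ite_eq P.support j (fun i => ratRed p hp (P.coeff i))]
  split_ifs with h
  · rfl
  · rw [Polynomial.notMem_support_iff.mp h, ratRed_zero]

/-- A polynomial is `p`-good if no coefficient denominator is divisible by `p`. -/
def Good (p : ℕ) (P : Polynomial ℚ) : Prop := ∀ i, ¬ p ∣ (P.coeff i).den

lemma good_coeffs {p : ℕ} {hp : p.Prime} {P : Polynomial ℚ} (h : Good p P) :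
    (↑P.coeffs : Set ℚ) ⊆ ratSub p hp := by
  intro c hc
  obtain ⟨n, _, rfl⟩ := Polynomial.mem_coeffs_iff.mp hc
  exact h n

lemma polyRed_eq_map (p : ℕ) (hp : p.Prime) (P : Polynomial ℚ) (h : Good p P) :
    polyRed p hp P = (P.toSubring (ratSub p hp) (good_coeffs h)).map (ratHom p hp) := by
  ext j
  rw [coeff_polyRed, coeff_map]
  show ratRed p hp (P.coeff j) = ratRed p hp ((P.toSubring (ratSub p hp) (good_coeffs h)).coeff j)
  rw [Polynomial.coeff_toSubring']

lemma good_mul {p : ℕ} (hp : p.Prime) {A B : Polynomial ℚ} (hA : Good p A) (hB : Good p B) :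
    Good p (A * B) := by
  intro i
  have : (A * B).coeff i ∈ ratSub p hp := by
    rw [Polynomial.coeff_mul]
    exact Subring.sum_mem _ fun c _ => Subring.mul_mem _ (hA c.1) (hB c.2)
  exact this

lemma good_add {p : ℕ} (hp : p.Prime) {A B : Polynomial ℚ} (hA : Good p A) (hB : Good p B) :
    Good p (A + B) := by
  intro i
  have : (A + B).coeff i ∈ ratSub p hp := by
    rw [Polynomial.coeff_add]
    exact Subring.add_mem _ (hA i) (hB i)
  exact this

lemma toSubring_injective_aux (p : ℕ) (hp : p.Prime) :
    Function.Injective (Polynomial.map (Subring.subtype (ratSub p hp))) :=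
  Polynomial.map_injective _ (ratSub p hp).subtype_injective

lemma polyRed_mul (p : ℕ) (hp : p.Prime) {A B : Polynomial ℚ} (hA : Good p A) (hB : Good p B) :
    polyRed p hp (A * B) = polyRed p hp A * polyRed p hp B := by
  have hAB : Good p (A * B) := good_mul hp hA hB
  rw [polyRed_eq_map p hp A hA, polyRed_eq_map p hp B hB, polyRed_eq_map p hp (A * B) hAB,
    ← Polynomial.map_mul]
  congr 1
  apply toSubring_injective_aux p hp
  rw [Polynomial.map_mul, Polynomial.map_toSubring, Polynomial.map_toSubring,
    Polynomial.map_toSubring]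

lemma polyRed_add (p : ℕ) (hp : p.Prime) {A B : Polynomial ℚ} (hA : Good p A) (hB : Good p B) :
    polyRed p hp (A + B) = polyRed p hp A + polyRed p hp B := by
  have hAB : Good p (A + B) := good_add hp hA hB
  rw [polyRed_eq_map p hp A hA, polyRed_eq_map p hp B hB, polyRed_eq_map p hp (A + B) hAB,
    ← Polynomial.map_add]
  congr 1
  apply toSubring_injective_aux p hp
  rw [Polynomial.map_add, Polynomial.map_toSubring, Polynomial.map_toSubring,
    Polynomial.map_toSubring]

lemma polyRed_one (p : ℕ) (hp : p.Prime) : polyRed p hp 1 = 1 := by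
  ext j
  rw [coeff_polyRed, Polynomial.coeff_one, Polynomial.coeff_one]
  split_ifs with h
  · simp [ratRed]
  · exact ratRed_zero p hp

lemma polyRed_intMap (p : ℕ) (hp : p.Prime) (A : Polynomial ℤ) :
    polyRed p hp (A.map (Int.castRingHom ℚ)) = A.map (Int.castRingHom (ZMod p)) := by
  ext j
  rw [coeff_polyRed, Polynomial.coeff_map, Polynomial.coeff_map]
  simp [ratRed]

lemma good_intMap (p : ℕ) (hp : p.Prime) (A : Polynomial ℤ) :
    Good p (A.map (Int.castRingHom ℚ)) := by
  intro i
  rw [Polynomial.coeff_map]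
  simp [hp.one_lt.ne', Nat.dvd_one]

lemma good_of_not_dvd_denLcm {p : ℕ} (hp : p.Prime) {A : Polynomial ℚ}
    (h : ¬ p ∣ denLcm A) : Good p A := by
  intro i
  by_cases hi : i ∈ A.support
  · exact fun hd => h (hd.trans (Finset.dvd_lcm hi))
  · rw [Polynomial.notMem_support_iff.mp hi]
    simp [hp.one_lt.ne', Nat.dvd_one]

lemma polyRed_monic (p : ℕ) (hp : p.Prime) {A : Polynomial ℚ} (hA : A.Monic) (hg : Good p A) :
    (polyRed p hp A).Monic ∧ (polyRed p hp A).natDegree = A.natDegree := by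
  haveI := Fact.mk hp
  have hle : (polyRed p hp A).natDegree ≤ A.natDegree := by
    apply Polynomial.natDegree_le_iff_coeff_eq_zero.mpr
    intro m hm
    rw [coeff_polyRed, Polynomial.coeff_eq_zero_of_natDegree_lt hm, ratRed_zero]
  have hcoeff : (polyRed p hp A).coeff A.natDegree = 1 := by
    rw [coeff_polyRed, hA.coeff_natDegree]
    simp [ratRed]
  have hge : A.natDegree ≤ (polyRed p hp A).natDegree :=
    Polynomial.le_natDegree_of_ne_zero (by rw [hcoeff]; exact one_ne_zero)
  have hdeg : (polyRed p hp A).natDegree = A.natDegree := le_antisymm hle hge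
  refine ⟨?_, hdeg⟩
  rw [Polynomial.Monic, Polynomial.leadingCoeff, hdeg, hcoeff]

lemma denLcm_ne_zero (A : Polynomial ℚ) : denLcm A ≠ 0 := by
  unfold denLcm
  rw [Ne, Finset.lcm_eq_zero_iff]
  rintro ⟨i, -, hi⟩
  have hi' : (A.coeff i).den = 0 := hi
  exact (A.coeff i).den_ne_zero hi'

lemma exists_coprime_div (z : ℂ) (F : Polynomial ℚ) (hFz : Polynomial.aeval z F ≠ 0) :
    ∀ n : ℕ, ∀ P : Polynomial ℚ, P.natDegree ≤ n → P ≠ 0 → Polynomial.aeval z P = 0 →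
      ∃ Q, Q ∣ P ∧ Polynomial.aeval z Q = 0 ∧ IsCoprime Q F := by
  intro n
  induction n with
  | zero =>
    intro P hdeg hP0 hz
    exfalso
    rw [Polynomial.eq_C_of_natDegree_le_zero hdeg] at hz hP0
    rw [Polynomial.aeval_C] at hz
    have hc0 : P.coeff 0 = 0 := (_root_.map_eq_zero (algebraMap ℚ ℂ)).mp hz
    exact hP0 (by rw [hc0, map_zero])
  | succ n ih =>
    intro P hdeg hP0 hz
    by_cases hc : IsCoprime P F
    · exact ⟨P, dvd_rfl, hz, hc⟩
    · classical
      set d := EuclideanDomain.gcd P F with hd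
      have hdP : d ∣ P := EuclideanDomain.gcd_dvd_left _ _
      have hdF : d ∣ F := EuclideanDomain.gcd_dvd_right _ _
      have hdu : ¬ IsUnit d := fun h => hc (EuclideanDomain.gcd_isUnit_iff.mp h)
      have hd0 : d ≠ 0 := by
        intro h
        rw [hd] at h
        exact hP0 (EuclideanDomain.gcd_eq_zero_iff.mp h).1
      obtain ⟨P', hP'⟩ := hdP
      have hdz : Polynomial.aeval z d ≠ 0 := by
        intro h
        obtain ⟨e, he⟩ := hdF
        exact hFz (by rw [he, map_mul, h, zero_mul])
      have hP'0 : P' ≠ 0 := fun h => hP0 (by rw [hP', h, mul_zero])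
      have hP'z : Polynomial.aeval z P' = 0 := by
        have h2 := hz
        rw [hP', map_mul] at h2
        rcases mul_eq_zero.mp h2 with h' | h'
        · exact absurd h' hdz
        · exact h'
      have hddeg : 1 ≤ d.natDegree := by
        rcases Nat.eq_zero_or_pos d.natDegree with h | h
        · exfalso
          apply hdu
          rw [Polynomial.eq_C_of_natDegree_le_zero h.le]
          apply Polynomial.isUnit_C.mpr
          apply isUnit_iff_ne_zero.mpr
          intro hcc
          exact hd0 (by rw [Polynomial.eq_C_of_natDegree_le_zero h.le, hcc, map_zero])
        · exact h
      have hdegP' : P'.natDegree ≤ n := by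
        have hsum : P.natDegree = d.natDegree + P'.natDegree := by
          rw [hP']
          exact Polynomial.natDegree_mul hd0 hP'0
        omega
      obtain ⟨Q, hQ1, hQ2, hQ3⟩ := ih P' hdegP' hP'0 hP'z
      exact ⟨Q, hQ1.trans ⟨d, by rw [hP']; ring⟩, hQ2, hQ3⟩

theorem stmt8 (P : Polynomial ℚ) (hm : P.Monic)
    (hroot : ∃ z : ℂ, Polynomial.aeval z P = 0 ∧ ∀ k : ℕ, 1 ≤ k → z ^ k ≠ 1)
    (M : ℕ) :
    {p : ℕ | ∃ hp : p.Prime, ¬ (p ∣ denLcm P) ∧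
      (haveI := Fact.mk hp; (polyRed p hp P).Splits) ∧
      ¬ (polyRed p hp P).IsRoot 0 ∧
      (haveI := Fact.mk hp;
        ((polyRed p hp P).roots.map (fun x => orderOf x)).lcm ≤ M)}.Finite := by
  classical
  obtain ⟨z, hz, hzu⟩ := hroot
  set N := M.factorial with hNdef
  have hN1 : 1 ≤ N := M.factorial_pos
  set F : Polynomial ℚ := (Polynomial.X ^ N - 1 : Polynomial ℤ).map (Int.castRingHom ℚ)
    with hFdef
  have hFz : Polynomial.aeval z F ≠ 0 := by
    have hev : Polynomial.aeval z F = z ^ N - 1 := by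
      rw [hFdef, Polynomial.aeval_def, Polynomial.eval₂_map]
      simp
    rw [hev, sub_ne_zero]
    exact hzu N hN1
  have hP0 : P ≠ 0 := hm.ne_zero
  obtain ⟨Q0, hQ0P, hQ0z, hQ0F⟩ := exists_coprime_div z F hFz P.natDegree P le_rfl hP0 hz
  have hQ00 : Q0 ≠ 0 := by rintro rfl; exact hP0 (zero_dvd_iff.mp hQ0P)
  have hlc0 : Q0.leadingCoeff ≠ 0 := Polynomial.leadingCoeff_ne_zero.mpr hQ00
  set Q : Polynomial ℚ := Q0 * Polynomial.C (Q0.leadingCoeff)⁻¹ with hQdef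
  have hQm : Q.Monic := Polynomial.monic_mul_leadingCoeff_inv hQ00
  have hlcu : IsUnit (Polynomial.C (Q0.leadingCoeff)⁻¹) :=
    Polynomial.isUnit_C.mpr (isUnit_iff_ne_zero.mpr (inv_ne_zero hlc0))
  have hQP : Q ∣ P := hlcu.mul_right_dvd.mpr hQ0P
  have hQz : Polynomial.aeval z Q = 0 := by rw [hQdef, map_mul, hQ0z, zero_mul]
  obtain ⟨U, V, hUV⟩ := hQ0F
  set U' : Polynomial ℚ := U * Polynomial.C Q0.leadingCoeff with hU'def
  have hBez : U' * Q + V * F = 1 := by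
    have e : U' * Q = U * Q0 := by
      calc U' * Q = (U * Q0) * (Polynomial.C Q0.leadingCoeff *
              Polynomial.C (Q0.leadingCoeff)⁻¹) := by rw [hU'def, hQdef]; ring
        _ = U * Q0 := by
            rw [← Polynomial.C_mul, mul_inv_cancel₀ hlc0, Polynomial.C_1, mul_one]
    rw [e, hUV]
  have hQdeg1 : 1 ≤ Q.natDegree := by
    by_contra h
    push_neg at h
    have hle : Q.natDegree ≤ 0 := by omega
    have hQ1 : Q = 1 := hQm.natDegree_eq_zero.mp (Nat.le_zero.mp hle)
    rw [hQ1, map_one] at hQz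
    exact one_ne_zero hQz
  obtain ⟨R, hPQR⟩ := hQP
  set D := denLcm P * (denLcm Q * (denLcm R * (denLcm U' * denLcm V))) with hDdef
  have hD0 : D ≠ 0 := by
    rw [hDdef]
    exact mul_ne_zero (denLcm_ne_zero _) (mul_ne_zero (denLcm_ne_zero _)
      (mul_ne_zero (denLcm_ne_zero _) (mul_ne_zero (denLcm_ne_zero _) (denLcm_ne_zero _))))
  apply Set.Finite.subset (Set.finite_Iic D)
  rintro p ⟨hpp, hPden, hsplit, h0root, hlcm⟩
  show p ≤ D
  by_contra hple
  have hnd : ¬ p ∣ D := fun h => hple (Nat.le_of_dvd (Nat.pos_of_ne_zero hD0) h)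
  have hgP : Good p P := good_of_not_dvd_denLcm hpp hPden
  have hgQ : Good p Q := good_of_not_dvd_denLcm hpp fun h => hnd (h.trans
    ⟨denLcm P * (denLcm R * (denLcm U' * denLcm V)), by rw [hDdef]; ring⟩)
  have hgR : Good p R := good_of_not_dvd_denLcm hpp fun h => hnd (h.trans
    ⟨denLcm P * (denLcm Q * (denLcm U' * denLcm V)), by rw [hDdef]; ring⟩)
  have hgU : Good p U' := good_of_not_dvd_denLcm hpp fun h => hnd (h.trans
    ⟨denLcm P * (denLcm Q * (denLcm R * denLcm V)), by rw [hDdef]; ring⟩)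
  have hgV : Good p V := good_of_not_dvd_denLcm hpp fun h => hnd (h.trans
    ⟨denLcm P * (denLcm Q * (denLcm R * denLcm U')), by rw [hDdef]; ring⟩)
  have hgF : Good p F := by rw [hFdef]; exact good_intMap p hpp _
  haveI := Fact.mk hpp
  have hmP := polyRed_monic p hpp hm hgP
  have hP'ne : polyRed p hpp P ≠ 0 := hmP.1.ne_zero
  have hmulPR : polyRed p hpp P = polyRed p hpp Q * polyRed p hpp R := by
    have h := polyRed_mul p hpp hgQ hgR
    rw [← hPQR] at h
    exact h
  have hQ'dvd : polyRed p hpp Q ∣ polyRed p hpp P := ⟨polyRed p hpp R, hmulPR⟩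
  have hQ'm := polyRed_monic p hpp hQm hgQ
  have hsplitQ : (polyRed p hpp Q).Splits :=
    Polynomial.Splits.of_dvd hsplit hP'ne hQ'dvd
  have hQ'deg : (polyRed p hpp Q).degree ≠ 0 := by
    rw [Polynomial.degree_eq_natDegree hQ'm.1.ne_zero, hQ'm.2]
    simp only [Ne, Nat.cast_eq_zero]
    omega
  obtain ⟨r, hr⟩ := Polynomial.Splits.exists_eval_eq_zero hsplitQ hQ'deg
  have hrQ : (polyRed p hpp Q).eval r = 0 := hr
  have hrP : (polyRed p hpp P).IsRoot r := by
    rw [Polynomial.IsRoot, hmulPR, Polynomial.eval_mul, hrQ, zero_mul]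
  have hroots : r ∈ (polyRed p hpp P).roots := Polynomial.mem_roots'.mpr ⟨hP'ne, hrP⟩
  have hne0 : ∀ x ∈ (polyRed p hpp P).roots, x ≠ 0 := by
    intro x hx hx0
    apply h0root
    rw [← hx0]
    exact (Polynomial.mem_roots'.mp hx).2
  set L := ((polyRed p hpp P).roots.map (fun x => orderOf x)).lcm with hLdef
  have hLd : L ∣ p - 1 := by
    apply Multiset.lcm_dvd.mpr
    intro o ho
    obtain ⟨x, hx, rfl⟩ := Multiset.mem_map.mp ho
    exact orderOf_dvd_of_pow_eq_one (ZMod.pow_card_sub_one_eq_one (hne0 x hx))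
  have hp1 : p - 1 ≠ 0 := by have := hpp.one_lt; omega
  have hL0 : L ≠ 0 := fun h => hp1 (zero_dvd_iff.mp (h ▸ hLd))
  have hor : orderOf r ∣ L := Multiset.dvd_lcm (Multiset.mem_map_of_mem _ hroots)
  have horpos : 0 < orderOf r :=
    Nat.pos_of_ne_zero fun h => hL0 (zero_dvd_iff.mp (h ▸ hor))
  have horM : orderOf r ≤ M := le_trans (Nat.le_of_dvd (Nat.pos_of_ne_zero hL0) hor) hlcm
  have hrN : r ^ N = 1 := orderOf_dvd_iff_pow_eq_one.mp (Nat.dvd_factorial horpos horM)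
  have hrF : (polyRed p hpp F).eval r = 0 := by
    rw [hFdef, polyRed_intMap]
    simp [Polynomial.eval_map, hrN]
  have h1 : polyRed p hpp (U' * Q + V * F) = 1 := by rw [hBez]; exact polyRed_one p hpp
  rw [polyRed_add p hpp (good_mul hpp hgU hgQ) (good_mul hpp hgV hgF),
    polyRed_mul p hpp hgU hgQ, polyRed_mul p hpp hgV hgF] at h1
  have hev := congrArg (Polynomial.eval r) h1
  simp only [Polynomial.eval_add, Polynomial.eval_mul, Polynomial.eval_one, hrQ, hrF,
    mul_zero, add_zero] at hev
  exact one_ne_zero hev.symm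
end

section
/- Let p be a prime and G = ℤ/pℤ ⋊ (⨁_{i=1}^m ℤ/r_iℤ) a finite group where each r_i divides p−1, r := r_1, and the generator of ℤ/r₁ℤ acts on ℤ/pℤ by multiplication by k where r equals the multiplicative order of k modulo p. Let N ⊴ G. If G/N contains a nilpotent subgroup of index strictly less than r, then N contains ℤ/pℤ × {0}. -/
theorem stmt15 (p : ℕ) (hp : p.Prime) (m : ℕ) (r : Fin (m + 1) → ℕ)
    (hr : ∀ i, r i ∣ p - 1) (k : ZMod p)
    -- `r 0` is the multiplicative order of `k` modulo `p`:
    (hk : orderOf k = r 0)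
    (φ : Multiplicative (∀ i, ZMod (r i)) →* MulAut (Multiplicative (ZMod p)))
    -- the generator of the first cyclic factor acts on `ℤ/pℤ` by multiplication by `k`:
    (hφ : ∀ x : ZMod p,
      φ (Multiplicative.ofAdd (Pi.single 0 (1 : ZMod (r 0)))) (Multiplicative.ofAdd x)
        = Multiplicative.ofAdd (k * x))
    (N : Subgroup (Multiplicative (ZMod p) ⋊[φ] Multiplicative (∀ i, ZMod (r i))))
    (hN : N.Normal)
    (hnil : haveI := hN;
      ∃ H' : Subgroup ((Multiplicative (ZMod p) ⋊[φ] Multiplicative (∀ i, ZMod (r i))) ⧸ N),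
        H'.index < r 0 ∧ Group.IsNilpotent H') :
    ∀ x : ZMod p, SemidirectProduct.inl (Multiplicative.ofAdd x) ∈ N := by
  haveI := hN
  obtain ⟨H', hidx, hnilp⟩ := hnil
  set A := Multiplicative (∀ i, ZMod (r i)) with hA
  set G := Multiplicative (ZMod p) ⋊[φ] A with hG
  -- basic arithmetic facts
  have hp1 : 0 < p - 1 := by have := hp.two_le; omega
  have hrne : ∀ i, r i ≠ 0 := by
    intro i h
    have := hr i
    rw [h, zero_dvd_iff] at this
    omega
  haveI : ∀ i, NeZero (r i) := fun i => ⟨hrne i⟩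
  haveI : NeZero p := ⟨hp.pos.ne'⟩
  have hrp : r 0 < p := by
    have := Nat.le_of_dvd hp1 (hr 0)
    omega
  -- finiteness
  haveI : Finite G := by
    apply Finite.of_injective
      (fun g : G => ((g.left, g.right) : Multiplicative (ZMod p) × A))
    intro a b h
    simp only [Prod.mk.injEq] at h
    exact SemidirectProduct.ext h.1 h.2
  let π : G →* G ⧸ N := QuotientGroup.mk' N
  let H : Subgroup G := H'.comap π
  have hHidx : H.index = H'.index :=
    H'.index_comap_of_surjective (QuotientGroup.mk'_surjective N)
  -- card of G
  have hcardG : Nat.card G = p * Nat.card A := by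
    have e : G ≃ Multiplicative (ZMod p) × A :=
      ⟨fun g => (g.left, g.right), fun x => ⟨x.1, x.2⟩,
        fun g => rfl, fun x => rfl⟩
    rw [Nat.card_congr e, Nat.card_prod, Nat.card_congr Multiplicative.ofAdd.symm,
      Nat.card_zmod]
  have hcA : Nat.card A = ∏ i, Nat.card (ZMod (r i)) := by
    rw [hA, Nat.card_congr Multiplicative.ofAdd.symm]
    exact Nat.card_pi
  have hpA : ¬ p ∣ Nat.card A := by
    intro h
    rw [hcA] at h
    obtain ⟨i, _, hi⟩ := (hp.prime.dvd_finset_prod_iff _).mp h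
    rw [Nat.card_zmod] at hi
    have h1 := Nat.le_of_dvd (Nat.pos_of_ne_zero (hrne i)) hi
    have h2 := Nat.le_of_dvd hp1 (hr i)
    omega
  -- p divides the card of H
  have hindexH : H.index < p := by omega
  have hindexH0 : H.index ≠ 0 := Subgroup.index_ne_zero_of_finite
  have hpH : p ∣ Nat.card H := by
    have hmul : Nat.card H * H.index = Nat.card G := H.card_mul_index
    have : p ∣ Nat.card H * H.index := by
      rw [hmul, hcardG]; exact Dvd.intro _ rfl
    rcases (hp.dvd_mul).mp this with h | h
    · exact h
    · exact absurd (Nat.le_of_dvd (Nat.pos_of_ne_zero hindexH0) h) (by omega)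
  -- Cauchy: element of order p in H
  haveI : Fact p.Prime := ⟨hp⟩
  obtain ⟨g, hg⟩ := exists_prime_orderOf_dvd_card' (G := H) p hpH
  have hgo : orderOf (g : G) = p :=
    (orderOf_injective H.subtype Subtype.coe_injective g).trans hg
  -- the right component of g is trivial
  have hgr : (g : G).right = 1 := by
    have h1 : orderOf ((g : G).right) ∣ p := by
      have h0 := orderOf_map_dvd (SemidirectProduct.rightHom) (g : G)
      rw [hgo] at h0
      simpa using h0
    have h2 : orderOf ((g : G).right) ∣ Nat.card A := orderOf_dvd_natCard _
    rcases (Nat.dvd_prime hp).mp h1 with h | h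
    · exact orderOf_eq_one_iff.mp h
    · rw [h] at h2; exact absurd h2 hpA
  have hgeq : (g : G) = SemidirectProduct.inl (g : G).left :=
    SemidirectProduct.ext rfl hgr
  -- every inl element is in H
  have hal : orderOf ((g : G).left) = p := by
    rw [← orderOf_injective (SemidirectProduct.inl (φ := φ))
      SemidirectProduct.inl_injective ((g : G).left), ← hgeq, hgo]
  have hzp : Subgroup.zpowers ((g : G).left) = ⊤ := by
    apply Subgroup.eq_top_of_card_eq
    rw [Nat.card_zpowers, hal, Nat.card_congr Multiplicative.ofAdd.symm, Nat.card_zmod]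
  have hmem : ∀ y : ZMod p, SemidirectProduct.inl (Multiplicative.ofAdd y) ∈ H := by
    intro y
    have : Multiplicative.ofAdd y ∈ Subgroup.zpowers ((g : G).left) := by
      rw [hzp]; trivial
    obtain ⟨n, hn⟩ := this
    rw [← hn, map_zpow]
    exact Subgroup.zpow_mem H (hgeq ▸ g.2) n
  have hmem' : ∀ y : ZMod p, π (SemidirectProduct.inl (Multiplicative.ofAdd y)) ∈ H' :=
    fun y => Subgroup.mem_comap.mp (hmem y)
  -- pigeonhole: a power of t lands in H'
  let b : A := Multiplicative.ofAdd (Pi.single 0 (1 : ZMod (r 0)))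
  let t : G := SemidirectProduct.inr b
  have hpigeon : ∃ u : ℕ, 0 < u ∧ u < r 0 ∧ (π t) ^ u ∈ H' := by
    haveI : Finite (G ⧸ N) := Quotient.finite _
    have hninj : ¬ Function.Injective
        (fun i : Fin (r 0) => ((((π t) ^ (i : ℕ)) : G ⧸ N) : (G ⧸ N) ⧸ H')) := by
      intro hinj
      have := Nat.card_le_card_of_injective _ hinj
      rw [Nat.card_eq_fintype_card, Fintype.card_fin] at this
      have : r 0 ≤ H'.index := le_trans this (le_of_eq (H'.index_eq_card).symm)
      omega
    rw [Function.not_injective_iff] at hninj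
    obtain ⟨i, j, hij, hne⟩ := hninj
    rcases lt_or_gt_of_ne (fun h : (i : ℕ) = (j : ℕ) => hne (Fin.ext h)) with h | h
    · refine ⟨(j : ℕ) - (i : ℕ), by omega, by omega, ?_⟩
      have := (QuotientGroup.eq (s := H')).mp hij.symm
      rwa [← zpow_natCast, ← zpow_natCast, ← zpow_neg, ← zpow_add,
        show (-(j:ℤ) + (i:ℤ)) = -(((j:ℕ) - (i:ℕ) : ℕ) : ℤ) by omega,
        zpow_neg, zpow_natCast, inv_mem_iff] at this
    · refine ⟨(i : ℕ) - (j : ℕ), by omega, by omega, ?_⟩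
      have := (QuotientGroup.eq (s := H')).mp hij
      rwa [← zpow_natCast, ← zpow_natCast, ← zpow_neg, ← zpow_add,
        show (-(i:ℤ) + (j:ℤ)) = -(((i:ℕ) - (j:ℕ) : ℕ) : ℤ) by omega,
        zpow_neg, zpow_natCast, inv_mem_iff] at this
  obtain ⟨u, hu0, hur, hsH⟩ := hpigeon
  have hku : k ^ u ≠ 1 := by
    intro h
    have := orderOf_dvd_of_pow_eq_one h
    rw [hk] at this
    exact absurd (Nat.le_of_dvd hu0 this) (by omega)
  -- action of powers of b
  have hφu : ∀ (n : ℕ) (y : ZMod p),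
      φ (b ^ n) (Multiplicative.ofAdd y) = Multiplicative.ofAdd (k ^ n * y) := by
    intro n
    induction n with
    | zero => intro y; simp
    | succ n ih =>
      intro y
      rw [pow_succ, map_mul, MulAut.mul_apply, hφ, ih, pow_succ]
      ring_nf
  -- commutator computation in G
  have hcomm : ∀ y : ZMod p,
      SemidirectProduct.inl (Multiplicative.ofAdd y) * t ^ u *
        (SemidirectProduct.inl (Multiplicative.ofAdd y))⁻¹ * (t ^ u)⁻¹ =
      SemidirectProduct.inl (Multiplicative.ofAdd ((1 - k ^ u) * y)) := by
    intro y
    have htu : t ^ u = SemidirectProduct.inr (b ^ u) := (map_pow _ _ _).symm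
    rw [htu]
    have : (SemidirectProduct.inr (b ^ u) : G) * (SemidirectProduct.inl (Multiplicative.ofAdd y))⁻¹
        * (SemidirectProduct.inr (b ^ u))⁻¹
        = SemidirectProduct.inl (φ (b ^ u) (Multiplicative.ofAdd y)⁻¹) := by
      simp only [← map_inv]
      rw [SemidirectProduct.inl_aut]
    calc (SemidirectProduct.inl (Multiplicative.ofAdd y) : G) * SemidirectProduct.inr (b ^ u) *
          (SemidirectProduct.inl (Multiplicative.ofAdd y))⁻¹ * (SemidirectProduct.inr (b ^ u))⁻¹
        = SemidirectProduct.inl (Multiplicative.ofAdd y) *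
          (SemidirectProduct.inr (b ^ u) * (SemidirectProduct.inl (Multiplicative.ofAdd y))⁻¹ *
            (SemidirectProduct.inr (b ^ u))⁻¹) := by group
      _ = SemidirectProduct.inl (Multiplicative.ofAdd y) *
          SemidirectProduct.inl (φ (b ^ u) (Multiplicative.ofAdd y)⁻¹) := by rw [this]
      _ = SemidirectProduct.inl (Multiplicative.ofAdd ((1 - k ^ u) * y)) := by
          rw [← map_mul]
          congr 1
          rw [← ofAdd_neg, hφu, ← ofAdd_add]
          congr 1
          ring
  -- the main induction on the lower central series
  have main : ∀ n, ∀ y : ZMod p,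
      (⟨π (SemidirectProduct.inl (Multiplicative.ofAdd y)), hmem' y⟩ : H') ∈
        (⊤ : Subgroup H').lowerCentralSeries n := by
    intro n
    induction n with
    | zero => intro y; trivial
    | succ n ih =>
      intro y
      have hc : (1 - k ^ u) ≠ 0 := sub_ne_zero.mpr (Ne.symm hku)
      set z : ZMod p := (1 - k ^ u)⁻¹ * y with hz
      have hyz : (1 - k ^ u) * z = y := by
        rw [hz, ← mul_assoc, mul_inv_cancel₀ hc, one_mul]
      let g₁ : H' := ⟨π (SemidirectProduct.inl (Multiplicative.ofAdd z)), hmem' z⟩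
      let g₂ : H' := ⟨(π t) ^ u, hsH⟩
      have key : (⟨π (SemidirectProduct.inl (Multiplicative.ofAdd y)), hmem' y⟩ : H')
          = g₁ * g₂ * g₁⁻¹ * g₂⁻¹ := by
        apply Subtype.ext
        show π (SemidirectProduct.inl (Multiplicative.ofAdd y))
          = (g₁ : G ⧸ N) * g₂ * (g₁ : G ⧸ N)⁻¹ * (g₂ : G ⧸ N)⁻¹
        show π (SemidirectProduct.inl (Multiplicative.ofAdd y))
          = π (SemidirectProduct.inl (Multiplicative.ofAdd z)) * (π t) ^ u *
            (π (SemidirectProduct.inl (Multiplicative.ofAdd z)))⁻¹ * ((π t) ^ u)⁻¹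
        simp only [← map_pow, ← map_inv, ← map_mul]
        apply congrArg
        rw [hcomm z, hyz]
      rw [key]
      exact Subgroup.commutator_mem_commutator (ih z) (Subgroup.mem_top g₂)
  -- conclude
  obtain ⟨n, hn⟩ := nilpotent_iff_lowerCentralSeries.mp hnilp
  intro x
  have := main n x
  rw [hn, Subgroup.mem_bot] at this
  have : π (SemidirectProduct.inl (Multiplicative.ofAdd x)) = 1 :=
    congrArg Subtype.val this
  rwa [← QuotientGroup.eq_one_iff]
end

section
/- Let G = A ⋊ H be a semidirect product where both A and H are abelian. Then for every i ≥ 1, the (i+1)-th term of the lower central series of G equals the subgroup generated by all left-normed commutators [a, h_1, ..., h_i] with a ∈ A and h_1, ..., h_i ∈ H; in particular each such term is contained in A. -/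
open scoped commutatorElement

/-- The left-normed iterated commutator `[x, h₁, …, h_i]`. -/
def leftNormedComm {G : Type*} [Group G] : G → List G → G
  | x, [] => x
  | x, h :: t => leftNormedComm ⁅x, h⁆ t

theorem leftNormedComm_append {G : Type*} [Group G] (x : G) (l : List G) (y : G) :
    leftNormedComm x (l ++ [y]) = ⁅leftNormedComm x l, y⁆ := by
  induction l generalizing x with
  | nil => rfl
  | cons h t ih => simpa [leftNormedComm] using ih ⁅x, h⁆

section aux

open SemidirectProduct Subgroup

variable {A H : Type*} [CommGroup A] [CommGroup H] (φ : H →* MulAut A)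

/-- The generating set of left-normed commutators of weight `i + 1`. -/
def Sset (i : ℕ) : Set (A ⋊[φ] H) :=
  {g | ∃ (a : A) (l : List H), l.length = i ∧ g = leftNormedComm (inl a) (l.map inr)}

theorem phi_comm (h k : H) (a : A) : φ k (φ h a) = φ h (φ k a) := by
  have : φ k * φ h = φ h * φ k := by rw [← map_mul, ← map_mul, mul_comm]
  calc φ k (φ h a) = (φ k * φ h) a := rfl
  _ = (φ h * φ k) a := by rw [this]
  _ = φ h (φ k a) := rfl

theorem phi_inv_comm (h k : H) (a : A) : φ k ((φ h)⁻¹ a) = (φ h)⁻¹ (φ k a) := by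
  apply (φ h).injective
  rw [phi_comm]; simp

theorem phi_inv_inv_comm (h k : H) (a : A) :
    (φ k)⁻¹ ((φ h)⁻¹ a) = (φ h)⁻¹ ((φ k)⁻¹ a) := by
  apply (φ k).injective
  conv_rhs => rw [phi_inv_comm]
  simp

theorem comm_inl (a : A) (g : A ⋊[φ] H) :
    ⁅(inl a : A ⋊[φ] H), g⁆ = inl (a * (φ g.right a)⁻¹) := by
  obtain ⟨b, k⟩ := g
  ext <;>
    simp [commutatorElement_def, mul_left, mul_right, inv_left, inv_right,
      map_mul, map_inv, MulAut.mul_apply, phi_comm, phi_inv_comm, phi_inv_inv_comm,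
      mul_assoc, mul_comm, mul_left_comm]

theorem key (x y : A ⋊[φ] H) :
    ⁅x, y⁆ = ⁅(inl x.left : A ⋊[φ] H), inr y.right⁆ *
      ⁅(inl y.left : A ⋊[φ] H), inr x.right⁆⁻¹ := by
  rw [comm_inl, comm_inl, right_inr, right_inr, ← MonoidHom.map_inv, ← MonoidHom.map_mul]
  obtain ⟨a, h⟩ := x; obtain ⟨b, k⟩ := y
  have hsymm : ∀ (h k : H) (a : A), φ h (φ k ((φ h).symm a)) = φ k a := fun h k a => by
    rw [phi_comm]; simp
  ext <;>
    simp [commutatorElement_def, mul_left, mul_right, inv_left, inv_right,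
      map_mul, map_inv, MulAut.mul_apply, phi_comm, phi_inv_comm, phi_inv_inv_comm,
      mul_assoc, mul_comm, mul_left_comm, hsymm]

theorem comm_inl_mul (a b : A) (g : A ⋊[φ] H) :
    ⁅(inl (a * b) : A ⋊[φ] H), g⁆ = ⁅(inl a : A ⋊[φ] H), g⁆ * ⁅(inl b : A ⋊[φ] H), g⁆ := by
  rw [comm_inl, comm_inl, comm_inl, ← MonoidHom.map_mul]
  congr 1
  simp [map_mul, mul_inv, mul_comm, mul_left_comm, mul_assoc]

theorem comm_inl_inv (a : A) (g : A ⋊[φ] H) :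
    ⁅((inl a)⁻¹ : A ⋊[φ] H), g⁆ = ⁅(inl a : A ⋊[φ] H), g⁆⁻¹ := by
  rw [← MonoidHom.map_inv, comm_inl, comm_inl, ← MonoidHom.map_inv]
  congr 1
  simp [map_inv, mul_comm]

theorem lnc_inl (a : A) (l : List H) :
    ∃ b : A, leftNormedComm (inl a : A ⋊[φ] H) (l.map inr) = inl b := by
  induction l generalizing a with
  | nil => exact ⟨a, rfl⟩
  | cons h t ih =>
      simp only [List.map_cons, leftNormedComm]
      rw [comm_inl]
      exact ih _

theorem Sset_subset_range (i : ℕ) :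
    Sset φ i ⊆ ((inl : A →* A ⋊[φ] H).range : Subgroup (A ⋊[φ] H)) := by
  rintro x ⟨a, l, -, rfl⟩
  obtain ⟨b, hb⟩ := lnc_inl φ a l
  exact ⟨b, hb.symm⟩

theorem closure_S_le_range (i : ℕ) :
    Subgroup.closure (Sset φ i) ≤ (inl : A →* A ⋊[φ] H).range :=
  (Subgroup.closure_le _).mpr (Sset_subset_range φ i)

theorem step (i : ℕ) :
    ⁅Subgroup.closure (Sset φ i), (⊤ : Subgroup (A ⋊[φ] H))⁆ = Subgroup.closure (Sset φ (i + 1)) := by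
  apply le_antisymm
  · rw [Subgroup.commutator_le]
    intro n hn g _
    refine Subgroup.closure_induction
      (p := fun n _ => ∀ g : A ⋊[φ] H, ⁅n, g⁆ ∈ Subgroup.closure (Sset φ (i + 1)))
      ?_ ?_ ?_ ?_ hn g
    · rintro x ⟨a, l, hl, rfl⟩ g
      obtain ⟨b, hb⟩ := lnc_inl φ a l
      apply Subgroup.subset_closure
      refine ⟨a, l ++ [g.right], by simp [hl], ?_⟩
      rw [List.map_append, List.map_singleton, leftNormedComm_append, hb,
        comm_inl, comm_inl, right_inr]
    · intro g
      rw [commutatorElement_one_left]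
      exact one_mem _
    · intro x y hx hy px py g
      obtain ⟨a, rfl⟩ := closure_S_le_range φ i hx
      obtain ⟨b, rfl⟩ := closure_S_le_range φ i hy
      rw [← MonoidHom.map_mul, comm_inl_mul]
      exact mul_mem (px g) (py g)
    · intro x hx px g
      obtain ⟨a, rfl⟩ := closure_S_le_range φ i hx
      rw [comm_inl_inv]
      exact inv_mem (px g)
  · rw [Subgroup.closure_le]
    rintro x ⟨a, l, hl, rfl⟩
    obtain rfl | ⟨t, k, rfl⟩ := l.eq_nil_or_concat'
    · simp at hl
    · rw [List.map_append, List.map_singleton, leftNormedComm_append]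
      refine commutator_mem_commutator (Subgroup.subset_closure ⟨a, t, ?_, rfl⟩) (mem_top _)
      simpa using hl
end aux

open SemidirectProduct Subgroup in
theorem stmt16 {A H : Type*} [CommGroup A] [CommGroup H] (φ : H →* MulAut A)
    (i : ℕ) (hi : 1 ≤ i) :
    -- `lowerCentralSeries G i` is the paper's `G_{i+1}` (Mathlib indexes from `G_1 = G` at `0`).
    (⊤ : Subgroup (A ⋊[φ] H)).lowerCentralSeries i =
      Subgroup.closure {g : A ⋊[φ] H | ∃ (a : A) (l : List H), l.length = i ∧
        g = leftNormedComm (SemidirectProduct.inl a) (l.map SemidirectProduct.inr)} ∧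
    (⊤ : Subgroup (A ⋊[φ] H)).lowerCentralSeries i ≤
      (SemidirectProduct.inl : A →* A ⋊[φ] H).range := by
  have main : (⊤ : Subgroup (A ⋊[φ] H)).lowerCentralSeries i = Subgroup.closure (Sset φ i) := by
    induction i, hi using Nat.le_induction with
    | base =>
        apply le_antisymm
        · show Subgroup.closure _ ≤ _
          rw [Subgroup.closure_le]
          rintro x ⟨p, -, q, -, rfl⟩
          rw [key]
          exact mul_mem (Subgroup.subset_closure ⟨p.left, [q.right], rfl, rfl⟩)
            (inv_mem (Subgroup.subset_closure ⟨q.left, [p.right], rfl, rfl⟩))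
        · rw [Subgroup.closure_le]
          rintro x ⟨a, l, hl, rfl⟩
          match l, hl with
          | [h], _ =>
            exact Subgroup.subset_closure ⟨inl a, mem_top _, inr h, mem_top _,
              (commutatorElement_def _ _).symm⟩
    | succ n hn ih =>
        have : (⊤ : Subgroup (A ⋊[φ] H)).lowerCentralSeries (n + 1) =
            ⁅(⊤ : Subgroup (A ⋊[φ] H)).lowerCentralSeries n, (⊤ : Subgroup (A ⋊[φ] H))⁆ := rfl
        rw [this, ih, step]
  exact ⟨main, main.le.trans (closure_S_le_range φ i)⟩
end

section
/- Let Q_1, ..., Q_n be pairwise commuting n×n matrices over a field, each having all eigenvalues equal to 0 (i.e. each nilpotent). Then the product Q_1 Q_2 ⋯ Q_n is the zero matrix. -/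
open Polynomial Matrix

section Aux

variable {F : Type*} [Field F] {V : Type*} [AddCommGroup V] [Module F V]

lemma aux_ker_lt {S T : Module.End F V} (hST : Commute S T) (hS : IsNilpotent S)
    (hT : T ≠ 0) : LinearMap.ker T < LinearMap.ker (S * T) := by
  obtain ⟨m, hm⟩ := hS
  obtain ⟨v0, hv0⟩ : ∃ v0, T v0 ≠ 0 := by
    by_contra h
    push_neg at h
    exact hT (LinearMap.ext fun v => h v)
  have hcomm : ∀ x, S (T x) = T (S x) := fun x => by
    have := congrFun (congrArg DFunLike.coe hST.eq) x
    simpa [Module.End.mul_apply] using this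
  have hex : ∃ j, T ((S ^ j) v0) = 0 := ⟨m, by rw [hm]; simp⟩
  classical
  set j := Nat.find hex with hj
  have hj0 : j ≠ 0 := by
    intro h
    have := Nat.find_spec hex
    rw [← hj, h] at this
    simp at this
    exact hv0 this
  set v := (S ^ (j - 1)) v0 with hv
  have hTv : T v ≠ 0 := Nat.find_min hex (by omega)
  have hSv : S v = (S ^ j) v0 := by
    have h1 : j = j - 1 + 1 := by omega
    rw [hv, ← Module.End.mul_apply, ← pow_succ', ← h1]
  have hSTv : S (T v) = 0 := by
    rw [hcomm, hSv]
    exact Nat.find_spec hex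
  rw [SetLike.lt_iff_le_and_exists]
  refine ⟨fun x hx => ?_, v, ?_, hTv⟩
  · rw [LinearMap.mem_ker] at hx
    rw [LinearMap.mem_ker, Module.End.mul_apply, hx, map_zero]
  · rw [LinearMap.mem_ker, Module.End.mul_apply, hSTv]

lemma aux_list [FiniteDimensional F V] (L : List (Module.End F V))
    (hnil : ∀ f ∈ L, IsNilpotent f)
    (hcomm : ∀ f ∈ L, ∀ g ∈ L, Commute f g) :
    L.prod = 0 ∨ L.length ≤ Module.finrank F (LinearMap.ker L.prod) := by
  induction L with
  | nil => right; simp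
  | cons f L ih =>
    rcases ih (fun g hg => hnil g (List.mem_cons_of_mem _ hg))
      (fun g hg h hh => hcomm g (List.mem_cons_of_mem _ hg) h (List.mem_cons_of_mem _ hh))
      with h0 | hle
    · left; simp [List.prod_cons, h0]
    · by_cases hT : L.prod = 0
      · left; simp [List.prod_cons, hT]
      · right
        have hcf : Commute f L.prod :=
          Commute.list_prod_right _ _ fun g hg =>
            hcomm f (List.mem_cons_self) g (List.mem_cons_of_mem _ hg)
        have hlt := aux_ker_lt hcf (hnil f (List.mem_cons_self)) hT
        have := Submodule.finrank_lt_finrank_of_lt hlt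
        rw [List.prod_cons, List.length_cons]
        omega

end Aux

theorem stmt17 {F : Type*} [Field F] {n : ℕ} (Q : Fin n → Matrix (Fin n) (Fin n) F)
    (hcomm : ∀ i j, Q i * Q j = Q j * Q i)
    -- all eigenvalues of each `Q i` are `0`, i.e. each `Q i` is nilpotent:
    (hnil : ∀ i, (Q i).charpoly = X ^ n) :
    (List.ofFn Q).prod = 0 := by
  have hpow : ∀ i, Q i ^ n = 0 := by
    intro i
    have := Matrix.aeval_self_charpoly (Q i)
    rw [hnil i] at this
    simpa using this
  let e := Matrix.toLinAlgEquiv' (R := F) (n := Fin n)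
  suffices h : e ((List.ofFn Q).prod) = 0 by
    have := congrArg e.symm h
    simpa using this
  rw [map_list_prod]
  have hmap : (List.ofFn Q).map e = List.ofFn fun i => e (Q i) := by
    rw [List.map_ofFn]; rfl
  rw [hmap]
  set L := List.ofFn fun i => e (Q i) with hL
  have hnil' : ∀ f ∈ L, IsNilpotent f := by
    intro f hf
    rw [hL, List.mem_ofFn] at hf
    obtain ⟨i, rfl⟩ := hf
    exact ⟨n, by rw [← map_pow, hpow i, map_zero]⟩
  have hcomm' : ∀ f ∈ L, ∀ g ∈ L, Commute f g := by
    intro f hf g hg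
    rw [hL, List.mem_ofFn] at hf hg
    obtain ⟨i, rfl⟩ := hf
    obtain ⟨j, rfl⟩ := hg
    show e (Q i) * e (Q j) = e (Q j) * e (Q i)
    rw [← _root_.map_mul, ← _root_.map_mul, hcomm i j]
  rcases aux_list L hnil' hcomm' with h0 | hle
  · exact h0
  · have hlen : L.length = n := by simp [hL]
    have hdim : Module.finrank F (Fin n → F) = n := by simp
    have hker : LinearMap.ker L.prod = ⊤ := by
      apply Submodule.eq_top_of_finrank_eq
      have h1 := Submodule.finrank_le (LinearMap.ker L.prod)
      omega
    exact LinearMap.ker_eq_top.mp hker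
end

section
/- Let A, B ∈ GL(n, ℂ) and set C = [A, B] = ABA^{-1}B^{-1}. If C commutes with both A and B, then every eigenvalue of C is a root of unity; more precisely, each eigenvalue λ of C satisfies λ^{dim ker(C − λI)} = 1. -/
theorem stmt18 {n : ℕ} (A B C : (Matrix (Fin n) (Fin n) ℂ)ˣ)
    (hC : C = A * B * A⁻¹ * B⁻¹)
    (hCA : C * A = A * C) (hCB : C * B = B * C) :
    ∀ lam : ℂ,
      Module.End.HasEigenvalue (Matrix.toLin' ((C : Matrix (Fin n) (Fin n) ℂ))) lam →
      (∃ k : ℕ, 1 ≤ k ∧ lam ^ k = 1) ∧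
      lam ^ (Module.finrank ℂ
        (Module.End.eigenspace (Matrix.toLin' ((C : Matrix (Fin n) (Fin n) ℂ))) lam)) = 1 := by
  intro lam hlam
  set f := Matrix.toLin' ((C : Matrix (Fin n) (Fin n) ℂ)) with hf
  set E := Module.End.eigenspace f lam with hE
  -- general mapsTo lemma
  have key : ∀ M : Matrix (Fin n) (Fin n) ℂ,
      (C : Matrix (Fin n) (Fin n) ℂ) * M = M * (C : Matrix (Fin n) (Fin n) ℂ) →
      Set.MapsTo (Matrix.toLin' M) E E := by
    intro M hM x hx
    rw [hE, SetLike.mem_coe, Module.End.mem_eigenspace_iff] at hx ⊢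
    have : f (Matrix.toLin' M x) = Matrix.toLin' M (f x) := by
      rw [hf]
      rw [← LinearMap.comp_apply, ← Matrix.toLin'_mul, hM, Matrix.toLin'_mul,
        LinearMap.comp_apply]
    rw [this, hx, map_smul]
  have commA : (C : Matrix (Fin n) (Fin n) ℂ) * A = A * (C : Matrix (Fin n) (Fin n) ℂ) :=
    congrArg Units.val hCA
  have commB : (C : Matrix (Fin n) (Fin n) ℂ) * B = B * (C : Matrix (Fin n) (Fin n) ℂ) :=
    congrArg Units.val hCB
  have hcA : Commute C A := hCA
  have hcB : Commute C B := hCB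
  have commA' : (C : Matrix (Fin n) (Fin n) ℂ) * ((A⁻¹ : (Matrix (Fin n) (Fin n) ℂ)ˣ) : Matrix (Fin n) (Fin n) ℂ) = ((A⁻¹ : (Matrix (Fin n) (Fin n) ℂ)ˣ) : Matrix (Fin n) (Fin n) ℂ) * (C : Matrix (Fin n) (Fin n) ℂ) :=
    congrArg Units.val hcA.inv_right.eq
  have commB' : (C : Matrix (Fin n) (Fin n) ℂ) * ((B⁻¹ : (Matrix (Fin n) (Fin n) ℂ)ˣ) : Matrix (Fin n) (Fin n) ℂ) = ((B⁻¹ : (Matrix (Fin n) (Fin n) ℂ)ˣ) : Matrix (Fin n) (Fin n) ℂ) * (C : Matrix (Fin n) (Fin n) ℂ) :=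
    congrArg Units.val hcB.inv_right.eq
  have commC : (C : Matrix (Fin n) (Fin n) ℂ) * C = C * (C : Matrix (Fin n) (Fin n) ℂ) := rfl
  have hAm := key _ commA
  have hBm := key _ commB
  have hA'm := key _ commA'
  have hB'm := key _ commB'
  have hCm := key _ commC
  -- restriction of f is lam • 1
  have hres : f.restrict hCm = lam • (1 : Module.End ℂ E) := by
    refine LinearMap.ext fun x => Subtype.ext ?_
    have hx : f ↑x = lam • (↑x : Fin n → ℂ) := Module.End.mem_eigenspace_iff.mp x.2
    simp [LinearMap.restrict_apply, hx]
    exact hx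
  have hdet1 : LinearMap.det (f.restrict hCm) = lam ^ Module.finrank ℂ E := by
    rw [hres]
    rw [LinearMap.det_smul]
    simp
  -- inverse pair determinant lemma
  have inv_pair : ∀ (U : (Matrix (Fin n) (Fin n) ℂ)ˣ)
      (h1 : Set.MapsTo (Matrix.toLin' (U : Matrix (Fin n) (Fin n) ℂ)) E E)
      (h2 : Set.MapsTo (Matrix.toLin' ((U⁻¹ : _ˣ) : Matrix (Fin n) (Fin n) ℂ)) E E),
      LinearMap.det ((Matrix.toLin' (U : Matrix (Fin n) (Fin n) ℂ)).restrict h1) *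
      LinearMap.det ((Matrix.toLin' ((U⁻¹ : _ˣ) : Matrix (Fin n) (Fin n) ℂ)).restrict h2) = 1 := by
    intro U h1 h2
    rw [← LinearMap.det_comp]
    have : ((Matrix.toLin' (U : Matrix (Fin n) (Fin n) ℂ)).restrict h1) ∘ₗ
        ((Matrix.toLin' ((U⁻¹ : _ˣ) : Matrix (Fin n) (Fin n) ℂ)).restrict h2) = LinearMap.id := by
      refine LinearMap.ext fun x => Subtype.ext ?_
      simp only [LinearMap.comp_apply, LinearMap.restrict_apply, LinearMap.id_apply]
      change Matrix.toLin' (U : Matrix (Fin n) (Fin n) ℂ)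
        (Matrix.toLin' ((U⁻¹ : _ˣ) : Matrix (Fin n) (Fin n) ℂ) (x : Fin n → ℂ)) = (x : Fin n → ℂ)
      rw [← LinearMap.comp_apply, ← Matrix.toLin'_mul, ← Units.val_mul, mul_inv_cancel]
      simp
    rw [this, LinearMap.det_id]
  -- decompose f
  have hdecomp : f.restrict hCm =
      ((Matrix.toLin' ((A : Matrix (Fin n) (Fin n) ℂ))).restrict hAm) ∘ₗ
      ((Matrix.toLin' ((B : Matrix (Fin n) (Fin n) ℂ))).restrict hBm) ∘ₗ
      ((Matrix.toLin' ((↑A⁻¹ : Matrix (Fin n) (Fin n) ℂ))).restrict hA'm) ∘ₗ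
      ((Matrix.toLin' ((↑B⁻¹ : Matrix (Fin n) (Fin n) ℂ))).restrict hB'm) := by
    refine LinearMap.ext fun x => Subtype.ext ?_
    simp only [LinearMap.comp_apply, LinearMap.restrict_apply]
    change f (x : Fin n → ℂ) = Matrix.toLin' (A : Matrix (Fin n) (Fin n) ℂ)
      (Matrix.toLin' (B : Matrix (Fin n) (Fin n) ℂ)
        (Matrix.toLin' ((↑A⁻¹ : Matrix (Fin n) (Fin n) ℂ))
          (Matrix.toLin' ((↑B⁻¹ : Matrix (Fin n) (Fin n) ℂ)) (x : Fin n → ℂ))))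
    rw [hf, hC]
    simp only [Units.val_mul]
    rw [Matrix.toLin'_mul, Matrix.toLin'_mul, Matrix.toLin'_mul]
    rfl
  have hdet2 : LinearMap.det (f.restrict hCm) = 1 := by
    rw [hdecomp, LinearMap.det_comp, LinearMap.det_comp, LinearMap.det_comp]
    have h1 := inv_pair A hAm hA'm
    have h2 := inv_pair B hBm hB'm
    calc LinearMap.det ((Matrix.toLin' ((A : Matrix (Fin n) (Fin n) ℂ))).restrict hAm) *
        (LinearMap.det ((Matrix.toLin' ((B : Matrix (Fin n) (Fin n) ℂ))).restrict hBm) *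
        (LinearMap.det ((Matrix.toLin' ((↑A⁻¹ : Matrix (Fin n) (Fin n) ℂ))).restrict hA'm) *
        LinearMap.det ((Matrix.toLin' ((↑B⁻¹ : Matrix (Fin n) (Fin n) ℂ))).restrict hB'm)))
        = (LinearMap.det ((Matrix.toLin' ((A : Matrix (Fin n) (Fin n) ℂ))).restrict hAm) *
          LinearMap.det ((Matrix.toLin' ((↑A⁻¹ : Matrix (Fin n) (Fin n) ℂ))).restrict hA'm)) *
          (LinearMap.det ((Matrix.toLin' ((B : Matrix (Fin n) (Fin n) ℂ))).restrict hBm) *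
          LinearMap.det ((Matrix.toLin' ((↑B⁻¹ : Matrix (Fin n) (Fin n) ℂ))).restrict hB'm)) := by
          ring
      _ = 1 := by rw [h1, h2, one_mul]
  have hmain : lam ^ Module.finrank ℂ E = 1 := by rw [← hdet1, hdet2]
  have hpos : 1 ≤ Module.finrank ℂ E := by
    have hne : E ≠ ⊥ := hlam
    have : Nontrivial E := Submodule.nontrivial_iff_ne_bot.mpr hne
    exact Module.finrank_pos
  exact ⟨⟨Module.finrank ℂ E, hpos, hmain⟩, hmain⟩
end
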